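/- arXiv:2003.11414 — 3 statements merged into one kernel-verified Lean document; each statement's English description precedes it below -/
import Mathlib

section
/- For a bounded linear operator T : X → Y of finite rank k between normed spaces, the Hilbert-space factorization constant satisfies γ₂(T) ≤ √k · ‖T‖. -/
/-! John's maximal-volume argument. Among operators `u : ℓ₂^k → E` with `‖u‖ ≤ 1` take one
maximizing `|det u|`. If `‖y‖ = s ‖u y‖` with `s > √k`, let `v` be the unit vector along `y`. Then
`‖u ·‖ ≤ 1` on the convex hull of the unit ball and `± s v`, which contains the image of the ball
under the map stretching by `a` along `v` and by `b` orthogonally to it whenever `a ≥ 1` and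
`a² + (s² - 1) b² ≤ s²`. Since `s² > k`, these can be chosen with `a b^(k-1) > 1`, contradicting
maximality. So `‖u⁻¹‖ ≤ √k`, and `T = u ∘ (u⁻¹ ∘ T)` factors through `ℓ₂^k`. -/

/-- A factorization `T = A ∘ B` of an operator through a (real) Hilbert space `H`. -/
structure HilbertFactorization {X Y : Type} [NormedAddCommGroup X] [NormedSpace ℝ X]
    [NormedAddCommGroup Y] [NormedSpace ℝ Y] (T : X →L[ℝ] Y) where
  H : Type
  [grp : NormedAddCommGroup H]
  [ip : InnerProductSpace ℝ H]
  B : X →L[ℝ] H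
  A : H →L[ℝ] Y
  eq : A.comp B = T

/-- The quantity `‖A‖ * ‖B‖` of a Hilbert space factorization. -/
noncomputable def HilbertFactorization.c {X Y : Type} [NormedAddCommGroup X]
    [NormedSpace ℝ X] [NormedAddCommGroup Y] [NormedSpace ℝ Y] {T : X →L[ℝ] Y}
    (F : HilbertFactorization T) : ℝ :=
  letI := F.grp
  letI := F.ip
  ‖F.A‖ * ‖F.B‖

/-- The factorization constant `γ₂(T)` of an operator through Hilbert space. -/
noncomputable def gamma2 {X Y : Type} [NormedAddCommGroup X] [NormedSpace ℝ X]
    [NormedAddCommGroup Y] [NormedSpace ℝ Y] (T : X →L[ℝ] Y) : ℝ :=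
  sInf (Set.range fun F : HilbertFactorization T => F.c)

/-- The Banach–Mazur distance of a normed space `E` from the Euclidean space of its
(finite) dimension: the infimum of `‖u‖ * ‖u⁻¹‖` over isomorphisms. -/
noncomputable def euclDist (E : Type) [NormedAddCommGroup E] [NormedSpace ℝ E] : ℝ :=
  sInf {c : ℝ | ∃ u : E ≃L[ℝ] EuclideanSpace ℝ (Fin (Module.finrank ℝ E)),
    c = ‖(u : E →L[ℝ] EuclideanSpace ℝ (Fin (Module.finrank ℝ E)))‖ *
        ‖(u.symm : EuclideanSpace ℝ (Fin (Module.finrank ℝ E)) →L[ℝ] E)‖}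

/-- A (two-sided, not necessarily closed) ideal in the algebra `L(X)`. -/
def IsOpIdeal {X : Type} [NormedAddCommGroup X] [NormedSpace ℝ X]
    (I : Set (X →L[ℝ] X)) : Prop :=
  (0 : X →L[ℝ] X) ∈ I ∧ (∀ S ∈ I, ∀ T ∈ I, S + T ∈ I) ∧
    (∀ c : ℝ, ∀ S ∈ I, c • S ∈ I) ∧
    ∀ A : X →L[ℝ] X, ∀ S ∈ I, A.comp S ∈ I ∧ S.comp A ∈ I

/-- A closed two-sided ideal in the Banach algebra `L(X)`. -/
def IsClosedOpIdeal {X : Type} [NormedAddCommGroup X] [NormedSpace ℝ X]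
    (I : Set (X →L[ℝ] X)) : Prop :=
  IsClosed I ∧ IsOpIdeal I

open Module Metric RealInnerProductSpace

-- The point `(a t, b √(1 - t²))` of the ellipse with semi-axes `a, b` lies in
-- `l • (s, 0) + (1 - l) • disc` for some `l ∈ [0, 1]`.
lemma exists_sq_add_sq_le_one_sub_sq {s a b t : ℝ} (hs : 1 < s) (ha : 1 ≤ a)
    (hab : a ^ 2 + (s ^ 2 - 1) * b ^ 2 ≤ s ^ 2) (ht₀ : 0 ≤ t) (ht₁ : t ≤ 1) :
    ∃ l : ℝ, 0 ≤ l ∧ l ≤ 1 ∧ (a * t - l * s) ^ 2 + b ^ 2 * (1 - t ^ 2) ≤ (1 - l) ^ 2 := by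
  have hs₁ : 0 < s ^ 2 - 1 := by nlinarith
  have hbt : (s ^ 2 - 1) * (b ^ 2 * (1 - t ^ 2)) ≤ (s ^ 2 - a ^ 2) * (1 - t ^ 2) := by
    rw [← mul_assoc]; exact mul_le_mul_of_nonneg_right (by linarith) (by nlinarith)
  rcases le_or_gt (a * t * s) 1 with hats | hats
  · refine ⟨0, le_rfl, zero_le_one, ?_⟩
    have hst : s * t ≤ 1 := by nlinarith
    have : 0 ≤ (a ^ 2 - 1) * (1 - (s * t) ^ 2) :=
      mul_nonneg (by nlinarith) (by nlinarith [mul_nonneg (by linarith : 0 ≤ s) ht₀])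
    nlinarith
  · refine ⟨(a * t * s - 1) / (s ^ 2 - 1), by positivity, ?_, ?_⟩
    · have has : a ≤ s := by nlinarith
      rw [div_le_one hs₁]; nlinarith [mul_le_mul has ht₁ ht₀ (by linarith)]
    · have key : (s ^ 2 - 1) * ((1 - (a * t * s - 1) / (s ^ 2 - 1)) ^ 2
          - (a * t - (a * t * s - 1) / (s ^ 2 - 1) * s) ^ 2)
          = (a * t - s) ^ 2 := by
        field_simp; ring
      nlinarith [sq_nonneg (a - s * t)]

-- Take `a² = 1 + ε (s² - 1)` and `b² = 1 - ε`: by Bernoulli,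
-- `(a b^(k-1))² ≥ (1 + ε (s² - 1)) (1 - (k - 1) ε)`, which exceeds `1` for small `ε > 0`
-- as `s² > k`.
lemma exists_one_lt_mul_pow {k : ℕ} (hk : 1 ≤ k) {s : ℝ} (hs : (k : ℝ) < s ^ 2) :
    ∃ a b : ℝ, 1 ≤ a ∧ a ^ 2 + (s ^ 2 - 1) * b ^ 2 ≤ s ^ 2 ∧ 1 < a * b ^ (k - 1) := by
  have hk₁ : (1 : ℝ) ≤ k := by exact_mod_cast hk
  have hs₁ : 0 < s ^ 2 - 1 := by linarith
  set ε := (s ^ 2 - k) / (2 * k * (s ^ 2 - 1)) with hε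
  have hε₀ : 0 < ε := div_pos (by linarith) (by positivity)
  have hεs : ε * (s ^ 2 - 1) = (s ^ 2 - k) / (2 * k) := by
    rw [hε]; field_simp
  have hε₁ : ε < 1 := by
    rw [hε, div_lt_one (by positivity)]; nlinarith
  set a := √(1 + ε * (s ^ 2 - 1))
  set b := √(1 - ε)
  have ha : a ^ 2 = 1 + ε * (s ^ 2 - 1) := Real.sq_sqrt (by positivity)
  have hb : b ^ 2 = 1 - ε := Real.sq_sqrt (by linarith)
  refine ⟨a, b, Real.one_le_sqrt.2 (by nlinarith), by rw [ha, hb]; nlinarith, ?_⟩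
  have hbern : 1 - (k - 1) * ε ≤ (1 - ε) ^ (k - 1) := by
    have := one_add_mul_le_pow (a := -ε) (by linarith) (k - 1)
    rw [Nat.cast_sub hk] at this
    simpa [sub_eq_add_neg] using this
  have hkε : (k - 1) * ε * (s ^ 2 - 1) ≤ (s ^ 2 - k) / 2 := by
    rw [mul_assoc, hεs, mul_div_assoc']
    rw [div_le_div_iff₀ (by positivity) two_pos]
    nlinarith
  have hsq : 1 < (a * b ^ (k - 1)) ^ 2 := by
    rw [mul_pow, ← pow_mul, mul_comm (k - 1), pow_mul, hb, ha]
    calc (1 : ℝ) < (1 + ε * (s ^ 2 - 1)) * (1 - (k - 1) * ε) := by nlinarith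
      _ ≤ (1 + ε * (s ^ 2 - 1)) * (1 - ε) ^ (k - 1) := by gcongr
  nlinarith [show 0 ≤ a * b ^ (k - 1) by positivity]

lemma ContinuousLinearMap.det_comp {R M : Type*} [CommRing R] [TopologicalSpace M]
    [AddCommGroup M] [Module R M] (f g : M →L[R] M) : (f.comp g).det = f.det * g.det :=
  LinearMap.det_comp _ _

lemma LinearMap.det_eq_prod_of_apply_basis_eq_smul {ι R M : Type*} [Fintype ι] [DecidableEq ι]
    [CommRing R] [AddCommGroup M] [Module R M] (b : Basis ι R M) {f : M →ₗ[R] M} (c : ι → R)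
    (hf : ∀ i, f (b i) = c i • b i) : f.det = ∏ i, c i := by
  have : LinearMap.toMatrix b b f = Matrix.diagonal c := by
    ext i j
    rcases eq_or_ne i j with rfl | hij
    · simp [LinearMap.toMatrix_apply, hf]
    · simp [LinearMap.toMatrix_apply, hf, hij]
  rw [← LinearMap.det_toMatrix b, this, Matrix.det_diagonal]

section Hilbert

variable {F : Type*} [NormedAddCommGroup F] [InnerProductSpace ℝ F]

noncomputable def axialScaling (v : F) (a b : ℝ) : F →L[ℝ] F :=
  b • ContinuousLinearMap.id ℝ F + (a - b) • (innerSL ℝ v).smulRight v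

lemma axialScaling_apply (v : F) (a b : ℝ) (y : F) :
    axialScaling v a b y = b • y + ((a - b) * ⟪v, y⟫) • v := by
  simp [axialScaling, mul_smul]

lemma det_axialScaling [FiniteDimensional ℝ F] {v : F} (hv : ‖v‖ = 1) (a b : ℝ) :
    (axialScaling v a b).det = a * b ^ (finrank ℝ F - 1) := by
  have hpos : 0 < finrank ℝ F := finrank_pos_iff_exists_ne_zero.2 ⟨v, by rintro rfl; simp at hv⟩
  let i₀ : Fin (finrank ℝ F) := ⟨0, hpos⟩
  have hv₀ : Orthonormal ℝ (Set.domRestrict {i₀} fun _ ↦ v) :=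
    ⟨fun _ ↦ hv, fun i j hij ↦ absurd (Subsingleton.elim i j) hij⟩
  obtain ⟨g, hg⟩ := hv₀.exists_orthonormalBasis_extension_of_card_eq (Fintype.card_fin _).symm
  have hgv : g i₀ = v := hg i₀ rfl
  rw [ContinuousLinearMap.det,
    LinearMap.det_eq_prod_of_apply_basis_eq_smul g.toBasis fun j ↦ if j = i₀ then a else b]
  · rw [Fintype.prod_eq_mul_prod_compl i₀, if_pos rfl,
      Finset.prod_congr rfl fun j hj ↦ if_neg (Finset.mem_compl.1 hj ∘ Finset.mem_singleton.2),
      Finset.prod_const, Finset.card_compl, Finset.card_singleton, Fintype.card_fin]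
  · intro j
    rw [OrthonormalBasis.coe_toBasis, ContinuousLinearMap.coe_coe, axialScaling_apply, ← hgv,
      g.inner_eq_ite]
    by_cases hj : j = i₀
    · subst hj; simp only [if_true]; module
    · simp [hj, Ne.symm hj]

lemma exists_norm_axialScaling_sub_smul_le {v y : F} (hv : ‖v‖ = 1) (hy : ‖y‖ = 1)
    (hvy : 0 ≤ ⟪v, y⟫) {s a b : ℝ} (hs : 1 < s) (ha : 1 ≤ a)
    (hab : a ^ 2 + (s ^ 2 - 1) * b ^ 2 ≤ s ^ 2) :
    ∃ l : ℝ, 0 ≤ l ∧ ‖axialScaling v a b y - (l * s) • v‖ ≤ 1 - l := by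
  set t := ⟪v, y⟫
  have ht₁ : t ≤ 1 := by simpa [hv, hy] using real_inner_le_norm v y
  obtain ⟨l, hl₀, hl₁, hl⟩ := exists_sq_add_sq_le_one_sub_sq hs ha hab hvy ht₁
  refine ⟨l, hl₀, ?_⟩
  have hvw : ⟪v, y - t • v⟫ = 0 := by
    rw [inner_sub_right, real_inner_smul_right, real_inner_self_eq_norm_sq, hv]; ring
  have hw : ‖y - t • v‖ ^ 2 = 1 - t ^ 2 := by
    rw [norm_sub_sq_real, real_inner_smul_right, real_inner_comm, norm_smul, hv, hy,
      Real.norm_eq_abs, mul_one, sq_abs]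
    ring
  have hdecomp : axialScaling v a b y - (l * s) • v = (a * t - l * s) • v + b • (y - t • v) := by
    rw [axialScaling_apply]; module
  have hperp : ⟪(a * t - l * s) • v, b • (y - t • v)⟫ = 0 := by
    rw [real_inner_smul_left, real_inner_smul_right, hvw, mul_zero, mul_zero]
  rw [hdecomp, ← pow_le_pow_iff_left₀ (norm_nonneg _) (by linarith) two_ne_zero,
    sq, norm_add_sq_eq_norm_sq_add_norm_sq_real hperp, ← sq, ← sq, norm_smul, norm_smul, hv,
    mul_one, mul_pow, hw, Real.norm_eq_abs, Real.norm_eq_abs, sq_abs, sq_abs]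
  exact hl

-- The ellipsoid `axialScaling v a b '' ball` lies in the convex hull of the unit ball and
-- `± s • v`, on which `‖u ·‖ ≤ 1`.
lemma norm_comp_axialScaling_le_one {E : Type*} [NormedAddCommGroup E] [NormedSpace ℝ E]
    {u : F →L[ℝ] E} (hu : ‖u‖ ≤ 1) {v : F} (hv : ‖v‖ = 1) {s a b : ℝ} (hsv : ‖s • u v‖ ≤ 1)
    (hs : 1 < s) (ha : 1 ≤ a) (hab : a ^ 2 + (s ^ 2 - 1) * b ^ 2 ≤ s ^ 2) :
    ‖u.comp (axialScaling v a b)‖ ≤ 1 := by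
  suffices h : ∀ y, ‖y‖ = 1 → 0 ≤ ⟪v, y⟫ → ‖u (axialScaling v a b y)‖ ≤ 1 by
    refine ContinuousLinearMap.opNorm_le_of_unit_norm zero_le_one fun y hy ↦ ?_
    rcases le_total 0 ⟪v, y⟫ with hvy | hvy
    · exact h y hy hvy
    · simpa using h (-y) (by rwa [norm_neg]) (by rwa [inner_neg_right, neg_nonneg])
  intro y hy hvy
  obtain ⟨l, hl₀, hl⟩ := exists_norm_axialScaling_sub_smul_le hv hy hvy hs ha hab
  calc ‖u (axialScaling v a b y)‖
      = ‖l • u (s • v) + u (axialScaling v a b y - (l * s) • v)‖ := by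
        rw [← map_smul, ← map_add, smul_smul, add_sub_cancel]
    _ ≤ l * ‖s • u v‖ + ‖u‖ * (1 - l) := by
        grw [norm_add_le, norm_smul, map_smul, Real.norm_eq_abs, abs_of_nonneg hl₀, u.le_opNorm,
          hl]
    _ ≤ l * 1 + 1 * (1 - l) := by
        gcongr
        linarith [(norm_nonneg _).trans hl]
    _ = 1 := by ring

end Hilbert

section John

variable {E F : Type*} [NormedAddCommGroup E] [NormedSpace ℝ E]
  [NormedAddCommGroup F] [InnerProductSpace ℝ F] [FiniteDimensional ℝ F]

-- Maximality of `|det (w ∘ u₀)|` is contradicted by `u₀ ∘ axialScaling v a b`, whose determinant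
-- gains the factor `a * b ^ (finrank ℝ F - 1) > 1`.
theorem norm_le_sqrt_finrank_mul_norm_apply_of_isMaxOn (w : E →L[ℝ] F) {u₀ : F →L[ℝ] E}
    (hu₀ : ‖u₀‖ ≤ 1) (hmax : IsMaxOn (fun u ↦ |(w.comp u).det|) (closedBall 0 1) u₀)
    (hdet : (w.comp u₀).det ≠ 0) (y : F) : ‖y‖ ≤ √(finrank ℝ F) * ‖u₀ y‖ := by
  by_contra! hlt
  have hy : y ≠ 0 := by rintro rfl; simp at hlt
  have hu₀y : u₀ y ≠ 0 := fun h ↦ hdet <| LinearMap.det_eq_zero_iff_ker_ne_bot.2 <|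
    (Submodule.ne_bot_iff _).2 ⟨y, by simp [h], hy⟩
  have : Nontrivial F := ⟨⟨y, 0, hy⟩⟩
  set s := ‖y‖ / ‖u₀ y‖
  set v := ‖y‖⁻¹ • y
  have hv : ‖v‖ = 1 := norm_smul_inv_norm hy
  have hsv : ‖s • u₀ v‖ = 1 := by
    have : ‖u₀ y‖ ≠ 0 := norm_ne_zero_iff.2 hu₀y
    simp only [v, s, map_smul, norm_smul, norm_div, norm_inv, norm_norm]
    field_simp
  have hks : (finrank ℝ F : ℝ) < s ^ 2 :=
    Real.lt_sq_of_sqrt_lt ((lt_div_iff₀ (norm_pos_iff.2 hu₀y)).2 hlt)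
  have hk : 1 ≤ finrank ℝ F := finrank_pos
  have hs : 1 < s := by
    have : (1 : ℝ) < s ^ 2 := lt_of_le_of_lt (by exact_mod_cast hk) hks
    nlinarith [div_nonneg (norm_nonneg y) (norm_nonneg (u₀ y))]
  obtain ⟨a, b, ha, hab, habk⟩ := exists_one_lt_mul_pow hk hks
  have hle : |(w.comp (u₀.comp (axialScaling v a b))).det| ≤ |(w.comp u₀).det| :=
    hmax (mem_closedBall_zero_iff.2 (norm_comp_axialScaling_le_one hu₀ hv hsv.le hs ha hab))
  rw [← ContinuousLinearMap.comp_assoc, ContinuousLinearMap.det_comp, det_axialScaling hv,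
    abs_mul, abs_of_pos (one_pos.trans habk)] at hle
  nlinarith [abs_pos.2 hdet]

lemma det_comp_ne_zero_of_isMaxOn (w : E ≃L[ℝ] F) {u₀ : F →L[ℝ] E}
    (hmax : IsMaxOn (fun u ↦ |((w : E →L[ℝ] F).comp u).det|) (closedBall 0 1) u₀) :
    ((w : E →L[ℝ] F).comp u₀).det ≠ 0 := by
  set c := (‖(w.symm : F →L[ℝ] E)‖ + 1)⁻¹
  have hc : 0 < c := by positivity
  have hmem : c • (w.symm : F →L[ℝ] E) ∈ closedBall 0 1 := by
    rw [mem_closedBall_zero_iff, norm_smul, Real.norm_eq_abs, abs_of_pos hc,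
      inv_mul_le_one₀ (by positivity)]
    linarith
  have hcomp :
      (w : E →L[ℝ] F).comp (c • (w.symm : F →L[ℝ] E)) = c • ContinuousLinearMap.id ℝ F := by
    ext; simp
  have hle : |((w : E →L[ℝ] F).comp (c • (w.symm : F →L[ℝ] E))).det|
      ≤ |((w : E →L[ℝ] F).comp u₀).det| := hmax hmem
  rw [hcomp, ContinuousLinearMap.det, ContinuousLinearMap.toLinearMap_smul, LinearMap.det_smul,
    ContinuousLinearMap.coe_id, LinearMap.det_id, mul_one] at hle
  intro h
  rw [h, abs_zero] at hle
  exact (pow_pos hc _).not_ge ((le_abs_self _).trans hle)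

variable [FiniteDimensional ℝ E]

theorem exists_isMaxOn_abs_det_comp (w : E →L[ℝ] F) :
    ∃ u₀ ∈ closedBall (0 : F →L[ℝ] E) 1, IsMaxOn (fun u ↦ |(w.comp u).det|) (closedBall 0 1) u₀ :=
  (isCompact_closedBall 0 1).exists_isMaxOn ⟨0, mem_closedBall_self zero_le_one⟩
    (ContinuousLinearMap.continuous_det.comp
      (continuous_const.clm_comp continuous_id)).abs.continuousOn

theorem exists_continuousLinearEquiv_norm_le_one_and_norm_symm_le_sqrt_finrank
    (h : finrank ℝ E = finrank ℝ F) :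
    ∃ u : F ≃L[ℝ] E, ‖(u : F →L[ℝ] E)‖ ≤ 1 ∧ ‖(u.symm : E →L[ℝ] F)‖ ≤ √(finrank ℝ F) := by
  let w := ContinuousLinearEquiv.ofFinrankEq h
  obtain ⟨u₀, hu₀, hmax⟩ := exists_isMaxOn_abs_det_comp (w : E →L[ℝ] F)
  rw [mem_closedBall_zero_iff] at hu₀
  have hlow := norm_le_sqrt_finrank_mul_norm_apply_of_isMaxOn _ hu₀ hmax
    (det_comp_ne_zero_of_isMaxOn w hmax)
  have hinj : Function.Injective u₀ := (injective_iff_map_eq_zero u₀).2 fun y hy ↦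
    norm_le_zero_iff.1 (by simpa [hy] using hlow y)
  let u : F ≃L[ℝ] E :=
    ((u₀ : F →ₗ[ℝ] E).linearEquivOfInjective hinj h.symm).toContinuousLinearEquiv
  refine ⟨u, hu₀, ContinuousLinearMap.opNorm_le_bound _ (Real.sqrt_nonneg _) fun x ↦ ?_⟩
  have hx : u₀ (u.symm x) = x := u.apply_symm_apply x
  simpa [hx] using hlow (u.symm x)

end John

lemma HilbertFactorization.c_nonneg {X Y : Type} [NormedAddCommGroup X]
    [NormedSpace ℝ X] [NormedAddCommGroup Y] [NormedSpace ℝ Y] {T : X →L[ℝ] Y}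
    (F : HilbertFactorization T) : 0 ≤ F.c :=
  letI := F.grp
  letI := F.ip
  mul_nonneg (norm_nonneg _) (norm_nonneg _)


lemma gamma2_le_norm_mul_norm {X Y H : Type} [NormedAddCommGroup X] [NormedSpace ℝ X]
    [NormedAddCommGroup Y] [NormedSpace ℝ Y] [NormedAddCommGroup H] [InnerProductSpace ℝ H]
    {T : X →L[ℝ] Y} (A : H →L[ℝ] Y) (B : X →L[ℝ] H) (h : A.comp B = T) :
    gamma2 T ≤ ‖A‖ * ‖B‖ :=
  csInf_le ⟨0, by rintro _ ⟨F, rfl⟩; exact F.c_nonneg⟩ ⟨⟨H, B, A, h⟩, rfl⟩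

/-- A finite rank operator `T` of rank `k` between normed spaces satisfies
`γ₂(T) ≤ √k * ‖T‖`. -/
theorem stmt_5 (X Y : Type) [NormedAddCommGroup X] [NormedSpace ℝ X]
    [NormedAddCommGroup Y] [NormedSpace ℝ Y] (T : X →L[ℝ] Y) (k : ℕ)
    [FiniteDimensional ℝ (LinearMap.range (T : X →ₗ[ℝ] Y))]
    (hk : Module.finrank ℝ (LinearMap.range (T : X →ₗ[ℝ] Y)) = k) :
    gamma2 T ≤ Real.sqrt k * ‖T‖ := by
  set R := LinearMap.range (T : X →ₗ[ℝ] Y)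
  obtain ⟨u, hu, hu_symm⟩ :=
    exists_continuousLinearEquiv_norm_le_one_and_norm_symm_le_sqrt_finrank
      (E := R) (F := EuclideanSpace ℝ (Fin k)) (by rw [hk, finrank_euclideanSpace_fin])
  rw [finrank_euclideanSpace_fin] at hu_symm
  let T₀ : X →L[ℝ] R := T.codRestrict R (LinearMap.mem_range_self _)
  have hT₀ : ‖T₀‖ ≤ ‖T‖ := T₀.opNorm_le_bound (norm_nonneg T) T.le_opNorm
  let U : EuclideanSpace ℝ (Fin k) →L[ℝ] R := u
  let V : R →L[ℝ] EuclideanSpace ℝ (Fin k) := u.symm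
  have hfact : (R.subtypeL.comp U).comp (V.comp T₀) = T := by
    ext x; exact congrArg Subtype.val (u.apply_symm_apply (T₀ x))
  calc gamma2 T ≤ ‖R.subtypeL.comp U‖ * ‖V.comp T₀‖ := gamma2_le_norm_mul_norm _ _ hfact
    _ ≤ (‖R.subtypeL‖ * ‖U‖) * (‖V‖ * ‖T₀‖) := by
        gcongr
        exacts [ContinuousLinearMap.opNorm_comp_le _ _, ContinuousLinearMap.opNorm_comp_le _ _]
    _ ≤ (1 * 1) * (√k * ‖T‖) := by grw [Submodule.norm_subtypeL_le, hu, hu_symm, hT₀]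
    _ = √k * ‖T‖ := by ring
end

section
/- The Banach–Mazur distance of ℓ_r^n to Euclidean space ℓ₂^n equals n^{1/r − 1/2} for 1 ≤ r ≤ 2; in particular, if r_i ↑ 2 and n_i are chosen so that n_i^{1/r_i − 1/2} → ∞, then d(ℓ_{r_i}^{n_i}) → ∞. -/
/-!
The formal identity `ℓ_r^n → ℓ₂^n` has norm at most `1` and its inverse norm at most
`n^(1/r - 1/2)` (monotonicity of `ℓ_p` norms in `p`, and Hölder), which gives the upper bound.
Conversely, for an isomorphism `w` of `ℓ_r^n` onto a Hilbert space, the parallelogram law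
yields signs `εᵢ` with `‖∑ εᵢ w eᵢ‖² ≤ ∑ ‖w eᵢ‖² ≤ n ‖w‖²`, whereas `‖∑ εᵢ eᵢ‖_r = n^(1/r)`;
so `n^(1/r) ≤ ‖w⁻¹‖ √n ‖w‖`.
-/

open Finset

section EuclDist

variable {E : Type} [NormedAddCommGroup E] [NormedSpace ℝ E] [FiniteDimensional ℝ E]

theorem euclDist_le {H : Type} [NormedAddCommGroup H] [InnerProductSpace ℝ H]
    (u : E ≃L[ℝ] H) :
    euclDist E ≤ ‖(u : E →L[ℝ] H)‖ * ‖(u.symm : H →L[ℝ] E)‖ := by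
  have : FiniteDimensional ℝ H := u.toLinearEquiv.finiteDimensional
  let b := (stdOrthonormalBasis ℝ H).reindex (finCongr u.toLinearEquiv.finrank_eq.symm)
  exact csInf_le ⟨0, fun c ⟨v, hv⟩ => hv ▸ by positivity⟩
    ⟨u.trans b.repr.toContinuousLinearEquiv, congr_arg₂ (· * ·)
      (b.repr.toLinearIsometry.norm_toContinuousLinearMap_comp).symm
      ((u.symm : H →L[ℝ] E).opNorm_comp_linearIsometryEquiv b.repr.symm).symm⟩

theorem le_euclDist {c : ℝ}
    (h : ∀ u : E ≃L[ℝ] EuclideanSpace ℝ (Fin (Module.finrank ℝ E)),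
      c ≤ ‖(u : E →L[ℝ] EuclideanSpace ℝ (Fin (Module.finrank ℝ E)))‖ *
        ‖(u.symm : EuclideanSpace ℝ (Fin (Module.finrank ℝ E)) →L[ℝ] E)‖) :
    c ≤ euclDist E :=
  le_csInf ⟨_, ContinuousLinearEquiv.ofFinrankEq (by simp), rfl⟩ fun _ ⟨u, hu⟩ => hu ▸ h u

end EuclDist

theorem Real.sum_rpow_le_rpow_sum {ι : Type*} (s : Finset ι) {t : ι → ℝ}
    (ht : ∀ i ∈ s, 0 ≤ t i) {q : ℝ} (hq : 1 ≤ q) :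
    ∑ i ∈ s, t i ^ q ≤ (∑ i ∈ s, t i) ^ q := by
  have hS : 0 ≤ ∑ i ∈ s, t i := sum_nonneg ht
  have hq' : 1 + (q - 1) ≠ 0 := by linarith
  calc ∑ i ∈ s, t i ^ q = ∑ i ∈ s, t i * t i ^ (q - 1) :=
        sum_congr rfl fun i hi => by rw [← Real.rpow_one_add' (ht i hi) hq', add_sub_cancel]
    _ ≤ ∑ i ∈ s, t i * (∑ j ∈ s, t j) ^ (q - 1) :=
        sum_le_sum fun i hi => mul_le_mul_of_nonneg_left
          (Real.rpow_le_rpow (ht i hi) (single_le_sum ht hi) (by linarith)) (ht i hi)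
    _ = (∑ i ∈ s, t i) ^ q := by rw [← sum_mul, ← Real.rpow_one_add' hS hq', add_sub_cancel]

namespace PiLp

variable {ι : Type*} [Fintype ι] {β : ι → Type*} [∀ i, SeminormedAddCommGroup (β i)] {p q : ENNReal}

theorem norm_toLp_ofLp_le (hp : 0 < p.toReal) (hpq : p ≤ q) (hq : q ≠ ⊤) (x : PiLp p β) :
    ‖WithLp.toLp q (WithLp.ofLp x)‖ ≤ ‖x‖ := by
  have hq0 : 0 < q.toReal := hp.trans_le (ENNReal.toReal_mono hq hpq)
  rw [norm_eq_sum hq0, norm_eq_sum hp]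
  set r := p.toReal
  set s := q.toReal
  have hsum : ∑ i, ‖x i‖ ^ s ≤ (∑ i, ‖x i‖ ^ r) ^ (s / r) := by
    calc ∑ i, ‖x i‖ ^ s = ∑ i, (‖x i‖ ^ r) ^ (s / r) := sum_congr rfl fun i _ => by
          rw [← Real.rpow_mul (norm_nonneg _), mul_div_cancel₀ _ hp.ne']
      _ ≤ _ := Real.sum_rpow_le_rpow_sum _ (fun i _ => by positivity)
          ((one_le_div hp).2 (ENNReal.toReal_mono hq hpq))
  calc (∑ i, ‖x i‖ ^ s) ^ (1 / s) ≤ ((∑ i, ‖x i‖ ^ r) ^ (s / r)) ^ (1 / s) :=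
        Real.rpow_le_rpow (by positivity) hsum (by positivity)
    _ = (∑ i, ‖x i‖ ^ r) ^ (1 / r) := by
        rw [← Real.rpow_mul (by positivity)]
        congr 1
        field_simp

theorem norm_le_card_rpow_mul_norm_toLp_ofLp (hp : 0 < p.toReal) (hpq : p ≤ q) (hq : q ≠ ⊤)
    (x : PiLp p β) :
    ‖x‖ ≤ (Fintype.card ι : ℝ) ^ (1 / p.toReal - 1 / q.toReal) *
      ‖WithLp.toLp q (WithLp.ofLp x)‖ := by
  have hrs : p.toReal ≤ q.toReal := ENNReal.toReal_mono hq hpq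
  have hq0 : 0 < q.toReal := hp.trans_le hrs
  rw [norm_eq_sum hq0, norm_eq_sum hp]
  set r := p.toReal
  set s := q.toReal
  have hholder : (∑ i, ‖x i‖ ^ r) ^ (s / r) ≤
      (Fintype.card ι : ℝ) ^ (s / r - 1) * ∑ i, ‖x i‖ ^ s := by
    convert Real.rpow_sum_le_const_mul_sum_rpow_of_nonneg univ ((one_le_div hp).2 hrs)
      (fun i _ => by positivity : ∀ i ∈ univ, 0 ≤ ‖x i‖ ^ r) using 3
    · rw [card_univ]
    · rw [← Real.rpow_mul (norm_nonneg _), mul_div_cancel₀ _ hp.ne']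
  calc (∑ i, ‖x i‖ ^ r) ^ (1 / r) = ((∑ i, ‖x i‖ ^ r) ^ (s / r)) ^ (1 / s) := by
        rw [← Real.rpow_mul (by positivity)]
        congr 1
        field_simp
    _ ≤ ((Fintype.card ι : ℝ) ^ (s / r - 1) * ∑ i, ‖x i‖ ^ s) ^ (1 / s) :=
        Real.rpow_le_rpow (by positivity) hholder (by positivity)
    _ = (Fintype.card ι : ℝ) ^ (1 / r - 1 / s) * (∑ i, ‖x i‖ ^ s) ^ (1 / s) := by
        rw [Real.mul_rpow (by positivity) (by positivity), ← Real.rpow_mul (by positivity)]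
        congr 2
        field_simp

end PiLp

section Signs

variable {F : Type*} [NormedAddCommGroup F] [InnerProductSpace ℝ F]

theorem exists_abs_eq_one_norm_add_smul_sq_le (x a : F) :
    ∃ σ : ℝ, |σ| = 1 ∧ ‖x + σ • a‖ ^ 2 ≤ ‖x‖ ^ 2 + ‖a‖ ^ 2 := by
  rcases le_total (inner ℝ x a) 0 with h | h
  · refine ⟨1, abs_one, ?_⟩
    rw [one_smul, norm_add_sq_real]
    linarith
  · refine ⟨-1, by simp, ?_⟩
    rw [norm_add_sq_real, real_inner_smul_right, norm_smul, Real.norm_eq_abs, abs_neg, abs_one,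
      one_mul]
    linarith

theorem exists_abs_eq_one_norm_sum_smul_sq_le {ι : Type*} (s : Finset ι) (a : ι → F) :
    ∃ ε : ι → ℝ, (∀ i, |ε i| = 1) ∧ ‖∑ i ∈ s, ε i • a i‖ ^ 2 ≤ ∑ i ∈ s, ‖a i‖ ^ 2 := by
  classical
  induction s using Finset.induction_on with
  | empty => exact ⟨1, fun _ => abs_one, by simp⟩
  | insert i s hi ih =>
    obtain ⟨ε, hε, hle⟩ := ih
    obtain ⟨σ, hσ, hσle⟩ := exists_abs_eq_one_norm_add_smul_sq_le (∑ j ∈ s, ε j • a j) (a i)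
    refine ⟨Function.update ε i σ, fun j => ?_, ?_⟩
    · rcases eq_or_ne j i with rfl | hj
      · rwa [Function.update_self]
      · rw [Function.update_of_ne hj, hε]
    · have hs : ∑ j ∈ s, Function.update ε i σ j • a j = ∑ j ∈ s, ε j • a j :=
        sum_congr rfl fun j hj => by rw [Function.update_of_ne (ne_of_mem_of_not_mem hj hi)]
      rw [sum_insert hi, sum_insert hi, hs, Function.update_self, add_comm]
      linarith

end Signs

theorem ContinuousLinearMap.exists_abs_eq_one_norm_apply_sum_smul_le {E F : Type*}
    [SeminormedAddCommGroup E] [NormedSpace ℝ E] [NormedAddCommGroup F] [InnerProductSpace ℝ F]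
    {ι : Type*} [Fintype ι] (T : E →L[ℝ] F) {e : ι → E} (he : ∀ i, ‖e i‖ ≤ 1) :
    ∃ ε : ι → ℝ, (∀ i, |ε i| = 1) ∧
      ‖T (∑ i, ε i • e i)‖ ≤ √(Fintype.card ι : ℝ) * ‖T‖ := by
  obtain ⟨ε, hε, hle⟩ := exists_abs_eq_one_norm_sum_smul_sq_le univ fun i => T (e i)
  refine ⟨ε, hε, ?_⟩
  have hTe : ∀ i, ‖T (e i)‖ ≤ ‖T‖ := fun i =>
    (T.le_opNorm (e i)).trans (mul_le_of_le_one_right (norm_nonneg T) (he i))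
  rw [← Real.sqrt_sq (norm_nonneg (T _)), ← Real.sqrt_sq (norm_nonneg T),
    ← Real.sqrt_mul (Nat.cast_nonneg _)]
  refine Real.sqrt_le_sqrt ?_
  calc ‖T (∑ i, ε i • e i)‖ ^ 2 ≤ ∑ i, ‖T (e i)‖ ^ 2 := by simpa only [map_sum, map_smul]
    _ ≤ ∑ _i : ι, ‖T‖ ^ 2 := sum_le_sum fun i _ => pow_le_pow_left₀ (norm_nonneg _) (hTe i) 2
    _ = _ := by simp

section EuclideanDistanceOfLp

variable {ι : Type} [Fintype ι]

theorem PiLp.norm_toLp_of_abs_eq_one {p : ENNReal} (hp : 0 < p.toReal) {ε : ι → ℝ}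
    (hε : ∀ i, |ε i| = 1) :
    ‖WithLp.toLp p ε‖ = (Fintype.card ι : ℝ) ^ (1 / p.toReal) := by
  simp [PiLp.norm_eq_sum hp, hε]

theorem PiLp.card_rpow_le_norm_mul_norm_symm [Nonempty ι] {p : ENNReal} [Fact (1 ≤ p)]
    (hp : p ≠ ⊤) {F : Type*} [NormedAddCommGroup F] [InnerProductSpace ℝ F]
    (w : PiLp p (fun _ : ι => ℝ) ≃L[ℝ] F) :
    (Fintype.card ι : ℝ) ^ (1 / p.toReal - 1 / 2) ≤
      ‖(w : PiLp p (fun _ : ι => ℝ) →L[ℝ] F)‖ * ‖(w.symm : F →L[ℝ] PiLp p (fun _ : ι => ℝ))‖ := by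
  classical
  set W := (w : PiLp p (fun _ : ι => ℝ) →L[ℝ] F)
  set W' := (w.symm : F →L[ℝ] PiLp p (fun _ : ι => ℝ))
  have hn : 0 < (Fintype.card ι : ℝ) := Nat.cast_pos.2 Fintype.card_pos
  have hp0 : 0 < p.toReal := ENNReal.toReal_pos (one_pos.trans_le Fact.out).ne' hp
  obtain ⟨ε, hε, hWx⟩ := W.exists_abs_eq_one_norm_apply_sum_smul_le
    fun i => (PiLp.norm_single p (fun _ : ι => ℝ) i 1).trans_le norm_one.le
  have hx : ∑ i, ε i • PiLp.single p i (1 : ℝ) = WithLp.toLp p ε := by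
    ext j
    simp [Pi.single_apply]
  rw [hx] at hWx
  have hchain : (Fintype.card ι : ℝ) ^ (1 / p.toReal) ≤ ‖W'‖ * (√(Fintype.card ι : ℝ) * ‖W‖) :=
    calc (Fintype.card ι : ℝ) ^ (1 / p.toReal) = ‖W' (W (WithLp.toLp p ε))‖ := by
          rw [← PiLp.norm_toLp_of_abs_eq_one hp0 hε]
          exact congr_arg norm (w.symm_apply_apply _).symm
      _ ≤ ‖W'‖ * ‖W (WithLp.toLp p ε)‖ := W'.le_opNorm _
      _ ≤ ‖W'‖ * (√(Fintype.card ι : ℝ) * ‖W‖) := mul_le_mul_of_nonneg_left hWx (norm_nonneg _)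
  rw [Real.rpow_sub hn, ← Real.sqrt_eq_rpow, div_le_iff₀ (Real.sqrt_pos.2 hn)]
  linarith

theorem euclDist_piLp [Nonempty ι] {p : ENNReal} [Fact (1 ≤ p)] (hp2 : p ≤ 2) :
    euclDist (PiLp p (fun _ : ι => ℝ)) = (Fintype.card ι : ℝ) ^ (1 / p.toReal - 1 / 2) := by
  have hp : p ≠ ⊤ := ne_top_of_le_ne_top ENNReal.ofNat_ne_top hp2
  have hp0 : 0 < p.toReal := ENNReal.toReal_pos (one_pos.trans_le Fact.out).ne' hp
  let u : PiLp p (fun _ : ι => ℝ) ≃L[ℝ] EuclideanSpace ℝ ι :=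
    (PiLp.continuousLinearEquiv p ℝ _).trans (PiLp.continuousLinearEquiv 2 ℝ _).symm
  refine le_antisymm ?_ (le_euclDist fun v => PiLp.card_rpow_le_norm_mul_norm_symm hp v)
  have hu : ‖(u : PiLp p (fun _ : ι => ℝ) →L[ℝ] EuclideanSpace ℝ ι)‖ ≤ 1 :=
    ContinuousLinearMap.opNorm_le_bound _ zero_le_one fun x => by
      rw [one_mul]
      exact PiLp.norm_toLp_ofLp_le hp0 hp2 ENNReal.ofNat_ne_top x
  have hu' : ‖(u.symm : EuclideanSpace ℝ ι →L[ℝ] PiLp p (fun _ : ι => ℝ))‖ ≤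
      (Fintype.card ι : ℝ) ^ (1 / p.toReal - 1 / 2) :=
    ContinuousLinearMap.opNorm_le_bound _ (by positivity) fun y => by
      have h := PiLp.norm_le_card_rpow_mul_norm_toLp_ofLp hp0 hp2 ENNReal.ofNat_ne_top (u.symm y)
      rw [ENNReal.toReal_ofNat] at h
      exact h
  calc euclDist _ ≤ _ := euclDist_le u
    _ ≤ 1 * (Fintype.card ι : ℝ) ^ (1 / p.toReal - 1 / 2) :=
        mul_le_mul hu hu' (norm_nonneg _) zero_le_one
    _ = _ := one_mul _

end EuclideanDistanceOfLp

theorem euclDist_piLp_fin {n : ℕ} (hn : 0 < n) {r : ℝ} (h2 : r ≤ 2)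
    [Fact (1 ≤ ENNReal.ofReal r)] :
    euclDist (PiLp (ENNReal.ofReal r) fun _ : Fin n => ℝ) = (n : ℝ) ^ (1 / r - 1 / 2) := by
  have : Nonempty (Fin n) := ⟨⟨0, hn⟩⟩
  have h1 : 1 ≤ r := ENNReal.one_le_ofReal.mp Fact.out
  have h := euclDist_piLp (ι := Fin n) (ENNReal.ofReal_le_of_le_toReal (by simpa using h2))
  rwa [ENNReal.toReal_ofReal (by linarith), Fintype.card_fin] at h

open Filter in
/-- The Banach–Mazur distance of `ℓ_r^n` to `ℓ₂^n` equals `n ^ (1/r - 1/2)` for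
`1 ≤ r ≤ 2`; consequently, if `n_i ^ (1/r_i - 1/2) → ∞` with `1 ≤ r_i ≤ 2`, then
`d(ℓ_{r_i}^{n_i}) → ∞`. -/
theorem stmt_9 :
    (∀ (n : ℕ), 0 < n → ∀ (r : ℝ) (h1 : 1 ≤ r), r ≤ 2 →
      haveI : Fact (1 ≤ ENNReal.ofReal r) := ⟨ENNReal.one_le_ofReal.mpr h1⟩
      euclDist (PiLp (ENNReal.ofReal r) (fun _ : Fin n => ℝ)) =
        (n : ℝ) ^ (1 / r - 1 / 2 : ℝ)) ∧
    ∀ (ri : ℕ → ℝ) (ni : ℕ → ℕ) (h1 : ∀ i, 1 ≤ ri i), (∀ i, ri i ≤ 2) →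
      (∀ i, 0 < ni i) → Monotone ri → Tendsto ri atTop (nhds 2) →
      Tendsto (fun i => (ni i : ℝ) ^ (1 / ri i - 1 / 2 : ℝ)) atTop atTop →
      Tendsto (fun i =>
          haveI : Fact (1 ≤ ENNReal.ofReal (ri i)) := ⟨ENNReal.one_le_ofReal.mpr (h1 i)⟩
          euclDist (PiLp (ENNReal.ofReal (ri i)) (fun _ : Fin (ni i) => ℝ)))
        atTop atTop := by
  refine ⟨fun n hn r h1 h2 => ?_, fun ri ni h1 h2 hpos _ _ hten => hten.congr fun i => ?_⟩
  · have : Fact (1 ≤ ENNReal.ofReal r) := ⟨ENNReal.one_le_ofReal.mpr h1⟩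
    exact euclDist_piLp_fin hn h2
  · have : Fact (1 ≤ ENNReal.ofReal (ri i)) := ⟨ENNReal.one_le_ofReal.mpr (h1 i)⟩
    exact (euclDist_piLp_fin (hpos i) (h2 i)).symm
end

section
/- Let Y be a Banach space containing a complemented subspace X, and suppose L(X) has at least κ distinct closed ideals for some cardinal κ. Then L(Y) has at least κ distinct closed ideals. Moreover, if L(X) contains an antichain of closed ideals of cardinality κ, so does L(Y). -/
open ContinuousLinearMap

theorem IsAntichain.image_of_reflects_on {α β : Type*} {r : α → α → Prop}
    {r' : β → β → Prop} {s : Set α} (hs : IsAntichain r s) (f : α → β)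
    (hf : ∀ a ∈ s, ∀ b ∈ s, r' (f a) (f b) → r a b) : IsAntichain r' (f '' s) := by
  rintro _ ⟨a, ha, rfl⟩ _ ⟨b, hb, rfl⟩ hne hr
  exact hs ha hb (fun hab => hne (congrArg f hab)) (hf a ha b hb hr)

section LiftOpIdeal

variable {X Y : Type} [NormedAddCommGroup X] [NormedSpace ℝ X]
  [NormedAddCommGroup Y] [NormedSpace ℝ Y]

def liftOpIdeal (P : Y →L[ℝ] X) (J : X →L[ℝ] Y) (I : Set (X →L[ℝ] X)) : Set (Y →L[ℝ] Y) :=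
  {T | ∀ A B : Y →L[ℝ] Y, P ∘L A ∘L T ∘L B ∘L J ∈ I}

variable {P : Y →L[ℝ] X} {J : X →L[ℝ] Y} {I I' : Set (X →L[ℝ] X)}

theorem isClosed_liftOpIdeal (hI : IsClosed I) : IsClosed (liftOpIdeal P J I) := by
  simp only [liftOpIdeal, Set.ofPred_forall]
  exact isClosed_iInter fun A => isClosed_iInter fun B => hI.preimage <|
    continuous_const.clm_comp <| continuous_const.clm_comp <| continuous_id.clm_comp continuous_const

theorem IsOpIdeal.liftOpIdeal (hI : IsOpIdeal I) : IsOpIdeal (liftOpIdeal P J I) := by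
  obtain ⟨h0, hadd, hsmul, -⟩ := hI
  refine ⟨fun A B => ?_, fun S hS T hT A B => ?_, fun c S hS A B => ?_, fun C S hS => ⟨?_, ?_⟩⟩
  · simpa using h0
  · simpa [comp_add, add_comp] using hadd _ (hS A B) _ (hT A B)
  · simpa [comp_smul, smul_comp] using hsmul c _ (hS A B)
  · intro A B
    simpa [comp_assoc] using hS (A ∘L C) B
  · intro A B
    simpa [comp_assoc] using hS A (C ∘L B)

theorem IsClosedOpIdeal.liftOpIdeal (hI : IsClosedOpIdeal I) :
    IsClosedOpIdeal (liftOpIdeal P J I) :=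
  ⟨isClosed_liftOpIdeal hI.1, hI.2.liftOpIdeal⟩

theorem comp_comp_mem_liftOpIdeal (hI : IsOpIdeal I) {S : X →L[ℝ] X} (hS : S ∈ I) :
    J ∘L S ∘L P ∈ liftOpIdeal P J I := by
  intro A B
  have : P ∘L A ∘L (J ∘L S ∘L P) ∘L B ∘L J = (P ∘L A ∘L J) ∘L S ∘L (P ∘L B ∘L J) := by
    simp only [comp_assoc]
  rw [this]
  exact (hI.2.2.2 _ _ (hI.2.2.2 _ S hS).2).1

theorem subset_of_liftOpIdeal_subset (hPJ : P ∘L J = .id ℝ X) (hI : IsOpIdeal I)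
    (h : liftOpIdeal P J I ⊆ liftOpIdeal P J I') : I ⊆ I' := by
  intro S hS
  have hcompress : P ∘L .id ℝ Y ∘L (J ∘L S ∘L P) ∘L .id ℝ Y ∘L J = S := by
    simp only [id_comp, ← comp_assoc, hPJ]
    simp only [comp_assoc, hPJ, comp_id]
  simpa only [hcompress] using h (comp_comp_mem_liftOpIdeal hI hS) (.id ℝ Y) (.id ℝ Y)

theorem liftOpIdeal_injOn (hPJ : P ∘L J = .id ℝ X) :
    Set.InjOn (liftOpIdeal P J) {I | IsOpIdeal I} := fun _ hI _ hI' h =>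
  (subset_of_liftOpIdeal_subset hPJ hI h.subset).antisymm
    (subset_of_liftOpIdeal_subset hPJ hI' h.superset)

end LiftOpIdeal

theorem codRestrict_comp_subtypeL_of_idempotent {R M : Type*} [Semiring R] [TopologicalSpace M]
    [AddCommMonoid M] [Module R M] {X : Submodule R M} {Pr : M →L[R] M} (hidem : Pr ∘L Pr = Pr)
    (hrange : ∀ y, Pr y ∈ X) (hX : ∀ x ∈ X, ∃ y, Pr y = x) :
    Pr.codRestrict X hrange ∘L X.subtypeL = .id R X := by
  ext ⟨x, hx⟩
  obtain ⟨y, rfl⟩ := hX x hx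
  exact congrArg (· y) hidem

theorem stmt_15_general (Y : Type) [NormedAddCommGroup Y] [NormedSpace ℝ Y]
    (X : Submodule ℝ Y)
    (Pr : Y →L[ℝ] Y) (hidem : Pr.comp Pr = Pr) (hrange : LinearMap.range (Pr : Y →ₗ[ℝ] Y) = X)
    (κ : Cardinal) :
    (κ ≤ Cardinal.mk {I : Set (X →L[ℝ] X) // IsClosedOpIdeal I} →
      κ ≤ Cardinal.mk {I : Set (Y →L[ℝ] Y) // IsClosedOpIdeal I}) ∧
    ((∃ F : Set (Set (X →L[ℝ] X)), (∀ I ∈ F, IsClosedOpIdeal I) ∧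
        (∀ I ∈ F, ∀ J ∈ F, I ≠ J → ¬ I ⊆ J) ∧ Cardinal.mk F = κ) →
      ∃ F : Set (Set (Y →L[ℝ] Y)), (∀ I ∈ F, IsClosedOpIdeal I) ∧
        (∀ I ∈ F, ∀ J ∈ F, I ≠ J → ¬ I ⊆ J) ∧ Cardinal.mk F = κ) := by
  have hPr : ∀ y, Pr y ∈ X := fun y => hrange ▸ LinearMap.mem_range_self (Pr : Y →ₗ[ℝ] Y) y
  set P := Pr.codRestrict X hPr
  have hPJ : P ∘L X.subtypeL = .id ℝ X :=
    codRestrict_comp_subtypeL_of_idempotent hidem hPr fun x hx => by rwa [← hrange] at hx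
  have hinj := liftOpIdeal_injOn hPJ
  refine ⟨fun hκ => hκ.trans <| Cardinal.mk_le_of_injective
    (f := fun I => ⟨liftOpIdeal P _ I.1, I.2.liftOpIdeal⟩) fun I I' h =>
      Subtype.ext (hinj I.2.2 I'.2.2 (congrArg Subtype.val h)), ?_⟩
  rintro ⟨F, hF, hanti, rfl⟩
  refine ⟨liftOpIdeal P X.subtypeL '' F, ?_, ?_, ?_⟩
  · rintro _ ⟨I, hI, rfl⟩
    exact (hF I hI).liftOpIdeal
  · exact IsAntichain.image_of_reflects_on hanti _ fun I hI _ _ =>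
      subset_of_liftOpIdeal_subset hPJ (hF I hI).2
  · exact Cardinal.mk_image_eq_of_injOn _ _ fun I hI I' hI' => hinj (hF I hI).2 (hF I' hI').2

/-- If `Y` is a Banach space containing a complemented (closed) subspace `X` and
`L(X)` has at least `κ` distinct closed ideals, then so does `L(Y)`; moreover an
antichain of closed ideals of `L(X)` of cardinality `κ` yields one in `L(Y)`. -/
theorem stmt_15 (Y : Type) [NormedAddCommGroup Y] [NormedSpace ℝ Y] [CompleteSpace Y]
    (X : Submodule ℝ Y) (hXc : IsClosed (X : Set Y))
    (Pr : Y →L[ℝ] Y) (hidem : Pr.comp Pr = Pr) (hrange : LinearMap.range (Pr : Y →ₗ[ℝ] Y) = X)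
    (κ : Cardinal) :
    (κ ≤ Cardinal.mk {I : Set (X →L[ℝ] X) // IsClosedOpIdeal I} →
      κ ≤ Cardinal.mk {I : Set (Y →L[ℝ] Y) // IsClosedOpIdeal I}) ∧
    ((∃ F : Set (Set (X →L[ℝ] X)), (∀ I ∈ F, IsClosedOpIdeal I) ∧
        (∀ I ∈ F, ∀ J ∈ F, I ≠ J → ¬ I ⊆ J) ∧ Cardinal.mk F = κ) →
      ∃ F : Set (Set (Y →L[ℝ] Y)), (∀ I ∈ F, IsClosedOpIdeal I) ∧
        (∀ I ∈ F, ∀ J ∈ F, I ≠ J → ¬ I ⊆ J) ∧ Cardinal.mk F = κ) :=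
  stmt_15_general Y X Pr hidem hrange κ
end
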